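/- Let G = (V, E) be a graph with a linear order < on E, F = (V, A_f) a spanning forest of G, and f ∈ E \ A_f an externally active edge of F. Then for every A_i ⊆ E_i(F) and A_e ⊆ E_e(F), the graphs (V, (A_f \ A_i) ∪ A_e) and (V, (A_f \ A_i) ∪ A_e ∪ {f}) have the same number of connected components; i.e., adding externally active edges never changes the component structure of any set obtained from F by deleting internally active edges. -/

import Mathlib

open Finset

attribute [local instance] Classical.propDecidable

/-- A multigraph on vertex type `V` with edge index type `E` is given by a map
`ends : E → Sym2 V` (loops and parallel edges are allowed).  For an edge subset
`A ⊆ E`, `edgeGraph ends A` is the simple graph on `V` whose adjacency is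
witnessed by some edge of `A`; it determines the connected components of the
spanning subgraph `(V, A)`. -/
def edgeGraph {V E : Type} (ends : E → Sym2 V) (A : Finset E) : SimpleGraph V where
  Adj a b := a ≠ b ∧ ∃ e ∈ A, ends e = s(a, b)
  symm := by
    refine ⟨?_⟩
    rintro a b ⟨hab, e, he, hs⟩
    exact ⟨Ne.symm hab, e, he, by rw [hs, Sym2.eq_swap]⟩
  loopless := by refine ⟨?_⟩; rintro a ⟨h, -⟩; exact h rfl

/-- `kc ends A` is the number of connected components of the spanning subgraph `(V, A)`. -/
noncomputable def kc {V E : Type} (ends : E → Sym2 V) (A : Finset E) : ℕ :=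
  Nat.card (edgeGraph ends A).ConnectedComponent

/-- `(V, A)` is a spanning forest of `(V, E)`: it is a forest
(`|A| + k((V,A)) = |V|`, which rules out loops, parallel edges and cycles)
with as many connected components as the whole graph. -/
def IsSpanningForest {V E : Type} [Fintype V] [Fintype E] (ends : E → Sym2 V)
    (A : Finset E) : Prop :=
  A.card + kc ends A = Fintype.card V ∧ kc ends A = kc ends Finset.univ

/-- `F - e + f`. -/
def swapEdge {E : Type} [DecidableEq E] (A : Finset E) (e f : E) : Finset E :=
  insert f (A.erase e)

/-- `e` is internally active in the spanning forest `(V, A)`. -/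
def InternallyActive {V E : Type} [Fintype V] [Fintype E] [DecidableEq E] [LinearOrder E]
    (ends : E → Sym2 V) (A : Finset E) (e : E) : Prop :=
  e ∈ A ∧ ¬ ∃ f, f ∉ A ∧ e < f ∧ IsSpanningForest ends (swapEdge A e f)

/-- `f` is externally active in the spanning forest `(V, A)`. -/
def ExternallyActive {V E : Type} [Fintype V] [Fintype E] [DecidableEq E] [LinearOrder E]
    (ends : E → Sym2 V) (A : Finset E) (f : E) : Prop :=
  f ∉ A ∧ ¬ ∃ e, e ∈ A ∧ f < e ∧ IsSpanningForest ends (swapEdge A e f)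

/-- The set `E_i(F)` of internally active edges of the spanning forest `F = (V, A)`. -/
noncomputable def intAct {V E : Type} [Fintype V] [Fintype E] [DecidableEq E] [LinearOrder E]
    (ends : E → Sym2 V) (A : Finset E) : Finset E :=
  Finset.univ.filter (InternallyActive ends A)

/-- The set `E_e(F)` of externally active edges of the spanning forest `F = (V, A)`. -/
noncomputable def extAct {V E : Type} [Fintype V] [Fintype E] [DecidableEq E] [LinearOrder E]
    (ends : E → Sym2 V) (A : Finset E) : Finset E :=
  Finset.univ.filter (ExternallyActive ends A)

/-! The ends `a, b` of `f` are joined in `A_f`, since a spanning forest has the components of `G`.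
No internally active `e` separates them: otherwise `A_f - e + f` would be a spanning forest,
contradicting the activity of `e` if `e < f` and that of `f` if `f < e`. In a forest, edges each of
whose removal keeps `a, b` joined can be removed all together, so `a, b` are still joined in
`A_f \ A_i`, and adding `f` merges no components. -/

open SimpleGraph

section Multigraph

variable {V E : Type} {ends : E → Sym2 V}

lemma edgeGraph_mono {A B : Finset E} (h : A ⊆ B) : edgeGraph ends A ≤ edgeGraph ends B :=
  fun _ _ ⟨hne, e, he, hs⟩ => ⟨hne, e, h he, hs⟩

lemma edgeGraph_empty : edgeGraph ends ∅ = ⊥ := by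
  ext x y
  simp [edgeGraph]

lemma kc_le_of_subset [Finite V] {A B : Finset E} (h : A ⊆ B) : kc ends B ≤ kc ends A :=
  ConnectedComponent.card_le_card_of_le (edgeGraph_mono h)

lemma kc_empty [Fintype V] : kc ends (∅ : Finset E) = Fintype.card V := by
  rw [kc, edgeGraph_empty, ← Nat.card_eq_fintype_card]
  refine (Nat.card_eq_of_bijective _ ⟨fun x y h => ?_, Quot.mk_surjective⟩).symm
  exact reachable_bot.mp (ConnectedComponent.eq.mp h)

def IsForest [Fintype V] (ends : E → Sym2 V) (A : Finset E) : Prop :=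
  A.card + kc ends A = Fintype.card V

lemma IsSpanningForest.isForest [Fintype V] [Fintype E] {A : Finset E}
    (hA : IsSpanningForest ends A) : IsForest ends A :=
  hA.1

variable [DecidableEq E]

lemma edgeGraph_adj_insert {A : Finset E} {g : E} {u v x y : V} (hg : ends g = s(u, v))
    (h : (edgeGraph ends (insert g A)).Adj x y) :
    (edgeGraph ends A).Adj x y ∨ s(x, y) = s(u, v) := by
  obtain ⟨hne, e, he, hs⟩ := h
  rcases Finset.mem_insert.mp he with rfl | he
  · exact Or.inr (hs.symm.trans hg)
  · exact Or.inl ⟨hne, e, he, hs⟩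

lemma reachable_of_reachable_insert {A : Finset E} {g : E} {u v x y : V}
    (hg : ends g = s(u, v)) (h : (edgeGraph ends (insert g A)).Reachable x y) :
    (edgeGraph ends A).Reachable x y ∨
      (edgeGraph ends A).Reachable x u ∧ (edgeGraph ends A).Reachable v y ∨
      (edgeGraph ends A).Reachable x v ∧ (edgeGraph ends A).Reachable u y := by
  rw [reachable_iff_reflTransGen] at h
  induction h with
  | refl => exact Or.inl .rfl
  | tail _ hadj ih =>
    simp only [← ConnectedComponent.eq] at ih ⊢
    rcases edgeGraph_adj_insert hg hadj with hadj | hs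
    · have := ConnectedComponent.eq.mpr hadj.reachable
      grind
    · rcases Sym2.eq_iff.mp hs with ⟨rfl, rfl⟩ | ⟨rfl, rfl⟩ <;> grind

lemma kc_insert_of_reachable [Finite V] {A : Finset E} {g : E} {u v : V}
    (hg : ends g = s(u, v)) (huv : (edgeGraph ends A).Reachable u v) :
    kc ends (insert g A) = kc ends A := by
  have hreach : (edgeGraph ends (insert g A)).Reachable = (edgeGraph ends A).Reachable := by
    ext x y
    refine ⟨fun h => ?_, (·.mono (edgeGraph_mono (ends := ends) (Finset.subset_insert g A)))⟩
    rcases reachable_of_reachable_insert hg h with h | ⟨hxu, hvy⟩ | ⟨hxv, huy⟩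
    · exact h
    · exact hxu.trans (huv.trans hvy)
    · exact hxv.trans (huv.symm.trans huy)
  unfold kc ConnectedComponent
  rw [hreach]

lemma kc_insert_lt_of_not_reachable [Finite V] {A : Finset E} {g : E} {u v : V}
    (hg : ends g = s(u, v)) (huv : ¬ (edgeGraph ends A).Reachable u v) :
    kc ends (insert g A) < kc ends A := by
  have hsurj := ConnectedComponent.surjective_map_ofLE
    (edgeGraph_mono (ends := ends) (Finset.subset_insert g A))
  refine lt_of_le_of_ne (Nat.card_le_card_of_surjective _ hsurj) fun hcard => huv ?_
  have hinj := ((Nat.bijective_iff_surjective_and_card _).mpr ⟨hsurj, hcard.symm⟩).injective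
  have hne : u ≠ v := by rintro rfl; exact huv .rfl
  have hadj : (edgeGraph ends (insert g A)).Adj u v := ⟨hne, g, Finset.mem_insert_self g A, hg⟩
  exact ConnectedComponent.eq.mp (hinj (ConnectedComponent.sound hadj.reachable))

lemma kc_le_kc_insert_add_one [Finite V] (A : Finset E) (g : E) :
    kc ends A ≤ kc ends (insert g A) + 1 := by
  obtain ⟨u, v, hg⟩ : ∃ u v, ends g = s(u, v) := Sym2.exists.mp ⟨_, rfl⟩
  let φ := ConnectedComponent.map
    (Hom.ofLE (edgeGraph_mono (ends := ends) (Finset.subset_insert g A)))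
  let ψ : (edgeGraph ends A).ConnectedComponent →
      Option (edgeGraph ends (insert g A)).ConnectedComponent :=
    fun c => if c = (edgeGraph ends A).connectedComponentMk u then none else some (φ c)
  have hinj : Function.Injective ψ := by
    intro c d hcd
    induction c using ConnectedComponent.ind with | _ x => ?_
    induction d using ConnectedComponent.ind with | _ y => ?_
    simp only [ψ] at hcd
    split_ifs at hcd with hx hy hy
    · exact hx.trans hy.symm
    simp only [Option.some.injEq, φ, ConnectedComponent.map_mk, Hom.ofLE_apply,
      ConnectedComponent.eq] at hcd
    rw [ConnectedComponent.eq] at hx hy ⊢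
    rcases reachable_of_reachable_insert hg hcd with h | ⟨hxu, -⟩ | ⟨-, huy⟩
    · exact h
    · exact absurd hxu hx
    · exact absurd huy.symm hy
  calc kc ends A ≤ Nat.card (Option (edgeGraph ends (insert g A)).ConnectedComponent) :=
        Nat.card_le_card_of_injective ψ hinj
    _ = kc ends (insert g A) + 1 := Finite.card_option

lemma card_le_card_add_kc [Fintype V] (B : Finset E) : Fintype.card V ≤ B.card + kc ends B := by
  induction B using Finset.induction with
  | empty => simp [kc_empty]
  | insert g B hg ih =>
    have := kc_le_kc_insert_add_one (ends := ends) B g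
    rw [Finset.card_insert_of_notMem hg]
    omega

namespace IsForest

variable [Fintype V] {A : Finset E} {e : E}

lemma kc_erase (hA : IsForest ends A) (he : e ∈ A) : kc ends (A.erase e) = kc ends A + 1 := by
  have hlower := card_le_card_add_kc (ends := ends) (A.erase e)
  have hupper := kc_le_kc_insert_add_one (ends := ends) (A.erase e) e
  rw [Finset.insert_erase he] at hupper
  have hcard := Finset.card_erase_add_one he
  unfold IsForest at hA
  omega

lemma erase (hA : IsForest ends A) (e : E) : IsForest ends (A.erase e) := by
  by_cases he : e ∈ A
  · have hkc := hA.kc_erase he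
    have hcard := Finset.card_erase_add_one he
    unfold IsForest at hA ⊢
    omega
  · rwa [Finset.erase_eq_of_notMem he]

lemma not_reachable_erase (hA : IsForest ends A) (he : e ∈ A) {u v : V}
    (hg : ends e = s(u, v)) :
    ¬ (edgeGraph ends (A.erase e)).Reachable u v := by
  intro huv
  have := kc_insert_of_reachable hg huv
  rw [Finset.insert_erase he, hA.kc_erase he] at this
  omega

/-- Otherwise `e'` would lie on a cycle of `A`. -/
lemma reachable_erase_erase (hA : IsForest ends A) {e' : E} {x y : V}
    (h : (edgeGraph ends (A.erase e)).Reachable x y)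
    (h' : (edgeGraph ends (A.erase e')).Reachable x y) :
    (edgeGraph ends ((A.erase e).erase e')).Reachable x y := by
  by_cases he' : e' ∈ A.erase e
  swap
  · rwa [Finset.erase_eq_of_notMem he']
  obtain ⟨u, v, hg⟩ : ∃ u v, ends e' = s(u, v) := Sym2.exists.mp ⟨_, rfl⟩
  have hbridge := hA.not_reachable_erase (Finset.mem_of_mem_erase he') hg
  have hmono {a b : V} (hab : (edgeGraph ends ((A.erase e).erase e')).Reachable a b) :
      (edgeGraph ends (A.erase e')).Reachable a b :=
    hab.mono (edgeGraph_mono (Finset.erase_subset_erase e' (Finset.erase_subset e A)))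
  rw [← Finset.insert_erase he'] at h
  rcases reachable_of_reachable_insert hg h with h | ⟨hxu, hvy⟩ | ⟨hxv, huy⟩
  · exact h
  · exact absurd (((hmono hxu).symm.trans h').trans (hmono hvy).symm) hbridge
  · exact absurd (((hmono huy).trans h'.symm).trans (hmono hxv)) hbridge

lemma reachable_sdiff (hA : IsForest ends A) (S : Finset E) {x y : V}
    (hxy : (edgeGraph ends A).Reachable x y)
    (hS : ∀ e ∈ S, (edgeGraph ends (A.erase e)).Reachable x y) :
    (edgeGraph ends (A \ S)).Reachable x y := by
  induction S using Finset.induction generalizing A with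
  | empty => rwa [Finset.sdiff_empty]
  | insert g S _ ih =>
    have hg := hS g (Finset.mem_insert_self g S)
    rw [Finset.sdiff_insert, ← Finset.erase_sdiff_comm]
    exact ih (hA.erase g) hg fun e he =>
      hA.reachable_erase_erase hg (hS e (Finset.mem_insert_of_mem he))

end IsForest

namespace IsSpanningForest

variable [Fintype V] [Fintype E] {A : Finset E}

lemma reachable (hA : IsSpanningForest ends A) {g : E} {u v : V} (hg : ends g = s(u, v)) :
    (edgeGraph ends A).Reachable u v := by
  by_contra huv
  have hlt := kc_insert_lt_of_not_reachable hg huv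
  have hle := kc_le_of_subset (ends := ends) (Finset.subset_univ (insert g A))
  rw [hA.2] at hlt
  omega

lemma swapEdge (hA : IsSpanningForest ends A) {e f : E} (he : e ∈ A) (hf : f ∉ A) {a b : V}
    (hg : ends f = s(a, b)) (hab : ¬ (edgeGraph ends (A.erase e)).Reachable a b) :
    IsSpanningForest ends (_root_.swapEdge A e f) := by
  have hkc : kc ends (_root_.swapEdge A e f) = kc ends A := by
    have hlt := kc_insert_lt_of_not_reachable hg hab
    have hle := kc_le_kc_insert_add_one (ends := ends) (A.erase e) f
    have herase := hA.isForest.kc_erase he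
    unfold _root_.swapEdge
    omega
  have hcard : (_root_.swapEdge A e f).card = A.card := by
    rw [_root_.swapEdge, Finset.card_insert_of_notMem (fun h => hf (Finset.mem_of_mem_erase h)),
      Finset.card_erase_add_one he]
  exact ⟨by rw [hcard, hkc]; exact hA.1, hkc.trans hA.2⟩

end IsSpanningForest

lemma ExternallyActive.reachable_erase_of_internallyActive [Fintype V] [Fintype E]
    [LinearOrder E] {A : Finset E} (hA : IsSpanningForest ends A) {e f : E}
    (hf : ExternallyActive ends A f) (he : InternallyActive ends A e) {a b : V}
    (hg : ends f = s(a, b)) : (edgeGraph ends (A.erase e)).Reachable a b := by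
  by_contra hab
  have hswap := hA.swapEdge he.1 hf.1 hg hab
  rcases lt_trichotomy e f with hef | rfl | hfe
  · exact he.2 ⟨f, hf.1, hef, hswap⟩
  · exact hf.1 he.1
  · exact hf.2 ⟨e, he.1, hfe, hswap⟩

end Multigraph

theorem external_edge_preserves_components_general {V E : Type} [Fintype V] [Fintype E]
    [DecidableEq E] [LinearOrder E] (ends : E → Sym2 V) (Af : Finset E)
    (hF : IsSpanningForest ends Af) (f : E) (hf : ExternallyActive ends Af f)
    (Ai Ae : Finset E) (hi : Ai ⊆ intAct ends Af) :
    kc ends ((Af \ Ai) ∪ Ae) = kc ends (insert f ((Af \ Ai) ∪ Ae)) := by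
  obtain ⟨a, b, hab⟩ : ∃ a b, ends f = s(a, b) := Sym2.exists.mp ⟨_, rfl⟩
  have hbridges : ∀ e ∈ Ai, (edgeGraph ends (Af.erase e)).Reachable a b := fun e he =>
    hf.reachable_erase_of_internallyActive hF (Finset.mem_filter.mp (hi he)).2 hab
  have hkept : (edgeGraph ends (Af \ Ai)).Reachable a b :=
    hF.isForest.reachable_sdiff Ai (hF.reachable hab) hbridges
  exact (kc_insert_of_reachable hab (hkept.mono (edgeGraph_mono Finset.subset_union_left))).symm

/-- Adding an externally active edge `f` never changes the number
of connected components of any set `(A_f \ A_i) ∪ A_e` obtained from the spanning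
forest by deleting internally active edges and adding externally active edges. -/
theorem external_edge_preserves_components {V E : Type} [Fintype V] [Fintype E]
    [DecidableEq E] [LinearOrder E] (ends : E → Sym2 V) (Af : Finset E)
    (hF : IsSpanningForest ends Af) (f : E) (hf : ExternallyActive ends Af f)
    (Ai Ae : Finset E) (hi : Ai ⊆ intAct ends Af) (he : Ae ⊆ extAct ends Af) :
    kc ends ((Af \ Ai) ∪ Ae) = kc ends (insert f ((Af \ Ai) ∪ Ae)) :=
  external_edge_preserves_components_general ends Af hF f hf Ai Ae hi
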